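/- Let w be a morphism in the Weyl groupoid of a Cartan scheme with finite root system, with reduced decomposition w = σ_{i_1}···σ_{i_k} and another (not necessarily reduced) decomposition w = σ_{j_1}···σ_{j_l}. Then {i_1,...,i_k} ⊆ {j_1,...,j_l} as sets. In particular, any two reduced decompositions of w use the same set of letters. -/

import Mathlib

set_option linter.unusedSectionVars false

/-- A Cartan scheme `C = C(I, A, (ρ_i), (C^a))`. -/
structure CartanScheme (I A : Type) [Fintype I] [DecidableEq I] [Fintype A] [Nonempty A] where
  ρ : I → A → A
  c : A → I → I → ℤ
  ρ_invol : ∀ i a, ρ i (ρ i a) = a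
  c_diag : ∀ a i, c a i i = 2
  c_offdiag_nonpos : ∀ a i j, i ≠ j → c a i j ≤ 0
  c_zero_symm : ∀ a i j, c a i j = 0 → c a j i = 0
  c_rho : ∀ a i j, c (ρ i a) i j = c a i j

namespace CartanScheme

variable {I A : Type} [Fintype I] [DecidableEq I] [Fintype A] [Nonempty A] [DecidableEq A]
variable (C : CartanScheme I A)

/-- The simple reflection `σ_i^a` as a map `ℤ^I → ℤ^I`, `σ_i^a(α_j) = α_j - c^a_{ij} α_i`. -/
def sigma (a : A) (i : I) : (I → ℤ) → (I → ℤ) :=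
  fun v k => v k - (if k = i then ∑ j, C.c a i j * v j else 0)

/-- Target object of the word `[i_1, …, i_k]` read at source object `a`:
`ρ_{i_1} ⋯ ρ_{i_k}(a)`. -/
def wordTarget (a : A) : List I → A
  | [] => a
  | i :: l => C.ρ i (wordTarget a l)

/-- The map `σ_{i_1} ⋯ σ_{i_k}^a : ℤ^I → ℤ^I` determined by a word with source `a`. -/
def wordMap (a : A) : List I → ((I → ℤ) → (I → ℤ))
  | [] => id
  | i :: l => C.sigma (C.wordTarget a l) i ∘ wordMap a l

theorem wordTarget_append (a : A) (l₁ l₂ : List I) :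
    C.wordTarget a (l₁ ++ l₂) = C.wordTarget (C.wordTarget a l₂) l₁ := by
  induction l₁ with
  | nil => rfl
  | cons i l ih => simp [wordTarget, ih]

theorem wordMap_append (a : A) (l₁ l₂ : List I) :
    C.wordMap a (l₁ ++ l₂) = C.wordMap (C.wordTarget a l₂) l₁ ∘ C.wordMap a l₂ := by
  induction l₁ with
  | nil => rfl
  | cons i l ih => simp [wordMap, ih, wordTarget_append, Function.comp_assoc]

/-- A morphism of the Weyl groupoid `W(C)`: a source object, a target object, and a map
`ℤ^I → ℤ^I` which is a composition of simple reflections along some word. -/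
@[ext]
structure Mor where
  src : A
  tgt : A
  toFun : (I → ℤ) → (I → ℤ)
  spec : ∃ l : List I, C.wordTarget src l = tgt ∧ C.wordMap src l = toFun

variable {C}

/-- A word realizes a morphism. -/
def Realizes (w : Mor C) (l : List I) : Prop :=
  C.wordTarget w.src l = w.tgt ∧ C.wordMap w.src l = w.toFun

variable (C)

/-- The identity morphism `id^a`. -/
def idMor (a : A) : Mor C := ⟨a, a, id, ⟨[], rfl, rfl⟩⟩

/-- The generator `σ_i^a ∈ Hom(a, ρ_i(a))`. -/
def genMor (i : I) (a : A) : Mor C :=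
  ⟨a, C.ρ i a, C.sigma a i, ⟨[i], rfl, Function.comp_id _⟩⟩

/-- The simple reflection with target `a`, i.e. `id^a σ_i = σ_i^{ρ_i(a)} ∈ Hom(ρ_i(a), a)`. -/
def sgen (a : A) (i : I) : Mor C :=
  { src := C.ρ i a, tgt := a, toFun := C.sigma (C.ρ i a) i,
    spec := ⟨[i], by simp [wordTarget, C.ρ_invol], Function.comp_id _⟩ }

variable {C}

/-- Composition `u ∘ v` (with `v` applied first); junk value `u` if not composable. -/
def Mor.comp (u v : Mor C) : Mor C :=
  if h : v.tgt = u.src then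
    { src := v.src, tgt := u.tgt, toFun := u.toFun ∘ v.toFun,
      spec := by
        obtain ⟨lu, hu1, hu2⟩ := u.spec
        obtain ⟨lv, hv1, hv2⟩ := v.spec
        refine ⟨lu ++ lv, ?_, ?_⟩
        · rw [C.wordTarget_append, hv1, h, hu1]
        · rw [C.wordMap_append, hv1, h, hu2, hv2] }
  else u

/-- Length of a morphism: minimal length of a realizing word. -/
noncomputable def len (w : Mor C) : ℕ := sInf {k | ∃ l : List I, Realizes w l ∧ l.length = k}

/-- A reduced decomposition. -/
def IsReduced (w : Mor C) (l : List I) : Prop := Realizes w l ∧ l.length = len w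

/-- The (right) weak order: `u ≤_R uv` iff `ℓ(uv) = ℓ(u) + ℓ(v)`. -/
def weakLe (u w : Mor C) : Prop :=
  ∃ v : Mor C, v.tgt = u.src ∧ w = u.comp v ∧ len w = len u + len v

/-- Membership in the parabolic subgroupoid `W_J(C)`. -/
def InParabolic (J : Set I) (w : Mor C) : Prop :=
  ∃ l : List I, (∀ i ∈ l, i ∈ J) ∧ Realizes w l

/-- Length with respect to the generators `σ_j`, `j ∈ J`. -/
noncomputable def lenPar (J : Set I) (w : Mor C) : ℕ :=
  sInf {k | ∃ l : List I, (∀ i ∈ l, i ∈ J) ∧ Realizes w l ∧ l.length = k}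

/-- The set of letters occurring in some reduced decomposition of `w`;
by the theorem on reduced decompositions this is the set `J(w)`. -/
def Jset (w : Mor C) : Set I := {i | ∃ l : List I, IsReduced w l ∧ i ∈ l}

variable (C)

/-- The set of real roots at the object `a`. -/
def roots (a : A) : Set (I → ℤ) :=
  {α | ∃ (b : A) (l : List I) (j : I),
    C.wordTarget b l = a ∧ α = C.wordMap b l (Pi.single j 1)}

/-- The set of positive (real) roots at `a`. -/
def posRoots (a : A) : Set (I → ℤ) := {α ∈ C.roots a | ∀ i, 0 ≤ α i}

/-- `R^re(C)` is a finite root system of type `C`: axioms (R1), (R2), (R4) and finiteness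
((R3) holds automatically for real roots). -/
def IsFRS : Prop :=
  (∀ a : A, (C.roots a).Finite) ∧
  (∀ (a : A) (α : I → ℤ), α ∈ C.roots a → (∀ i, 0 ≤ α i) ∨ (∀ i, α i ≤ 0)) ∧
  (∀ (a : A) (i : I) (α : I → ℤ), α ∈ C.roots a → (∃ z : ℤ, α = z • Pi.single i 1) →
    α = Pi.single i 1 ∨ α = -Pi.single i 1) ∧
  (∀ (a : A) (i j : I), i ≠ j →
    (fun x => C.ρ i (C.ρ j x))^[(C.roots a ∩
      {α | ∃ m n : ℕ, α = (m : ℤ) • Pi.single i 1 + (n : ℤ) • Pi.single j 1}).ncard] a = a)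

variable {C}

/-- `I_L(w)`: the set of simple reflections with target `w.tgt` below `w` in weak order. -/
def IL (w : Mor C) : Set I := {i | weakLe (sgen C w.tgt i) w}

/-- `m` is the longest element of `Hom(-,a) ∩ W_J(C)`, i.e. `w_J` at the object `a`. -/
def IsLongestPar (a : A) (J : Set I) (m : Mor C) : Prop :=
  m.tgt = a ∧ InParabolic J m ∧
    ∀ x : Mor C, x.tgt = a → InParabolic J x → weakLe x m

/-- `m` is the longest element `w_I` of `Hom(-,a)`. -/
def IsLongestAt (a : A) (m : Mor C) : Prop :=
  m.tgt = a ∧ ∀ x : Mor C, x.tgt = a → weakLe x m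

/-- `z` is the meet of `x` and `y` in `(Hom(-,a), ≤_R)`. -/
def IsMeet (a : A) (x y z : Mor C) : Prop :=
  z.tgt = a ∧ weakLe z x ∧ weakLe z y ∧
    ∀ t : Mor C, t.tgt = a → weakLe t x → weakLe t y → weakLe t z

/-- `z` is the join of `x` and `y` in `(Hom(-,a), ≤_R)`. -/
def IsJoin (a : A) (x y z : Mor C) : Prop :=
  z.tgt = a ∧ weakLe x z ∧ weakLe y z ∧
    ∀ t : Mor C, t.tgt = a → weakLe x t → weakLe y t → weakLe z t

/-- The left coset `u W_J(C) ⊆ Hom(-, u.tgt)`. -/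
def leftCoset (u : Mor C) (J : Set I) : Set (Mor C) :=
  {x | ∃ v : Mor C, InParabolic J v ∧ v.tgt = u.src ∧ x = u.comp v}

end CartanScheme

/-!
For a word `l` with source `a`, let `N(l)` be the set of positive roots at `a` that the word map
sends to non-positive vectors. Appending a letter `c` to a word `m` changes `N` only by `α_c`:
`N(m c) = σ_c (N(m) \ {α_c}) ∪ {α_c}` if `m(α_c) > 0`, and `N(m c) = σ_c (N(m) \ {α_c})`
otherwise.

The key fact is that `ℓ(w σ_s) > ℓ(w)` forces `w(α_s) > 0`. It is proved by induction on
`ℓ(w)` after factoring `w = u p`, where `p` is a word in two letters `s, t` and `u` has no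
descent at `s` or `t`, which reduces it to rank two. In rank two a word without inversions is
trivial: its map is the identity by a determinant argument, and it returns to its source object
by axiom (R4), because along an alternating word the number of inversions follows a sawtooth of
period `2 m_{st}`.

Consequently every letter `i` of a reduced word `l` occurs with nonzero coefficient in some
`β ∈ N(l)`. If `i` is missing from another word `l'` for the same morphism, then `l'(β)` keeps
the positive `i`-th coordinate of `β`, although `l'(β) = l(β)` is non-positive.
-/

lemma List.exists_eq_append_cons_cons_or_isChain_ne {α : Type*} (l : List α) :
    (∃ l₁ l₂ a, l = l₁ ++ a :: a :: l₂) ∨ l.IsChain (· ≠ ·) := by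
  induction l with
  | nil => exact Or.inr List.isChain_nil
  | cons a l ih =>
    rcases ih with ⟨l₁, l₂, b, rfl⟩ | hchain
    · exact Or.inl ⟨a :: l₁, l₂, b, rfl⟩
    rcases l with _ | ⟨b, l⟩
    · exact Or.inr (List.isChain_singleton a)
    by_cases hab : a = b
    · subst hab
      exact Or.inl ⟨[], l, a, rfl⟩
    · exact Or.inr (List.isChain_cons_cons.2 ⟨hab, hchain⟩)

lemma List.getD_mem_of_lt {α : Type*} {l : List α} {j : ℕ} (d : α) (hj : j < l.length) :
    l.getD j d ∈ l := by
  rw [List.getD_eq_getElem _ _ hj]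
  exact List.getElem_mem hj

lemma List.take_add_one_eq_append_getD {α : Type*} {l : List α} {j : ℕ} (d : α)
    (hj : j < l.length) : l.take (j + 1) = l.take j ++ [l.getD j d] := by
  rw [List.getD_eq_getElem _ _ hj, List.take_concat_get']

lemma List.drop_eq_getD_cons {α : Type*} {l : List α} {j : ℕ} (d : α) (hj : j < l.length) :
    l.drop j = l.getD j d :: l.drop (j + 1) := by
  rw [List.getD_eq_getElem _ _ hj, List.drop_eq_getElem_cons hj]

lemma List.IsChain.getD_ne_getD_add_one {α : Type*} {l : List α} (hl : l.IsChain (· ≠ ·))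
    {j : ℕ} (d : α) (hj : j + 1 < l.length) : l.getD j d ≠ l.getD (j + 1) d := by
  rw [List.getD_eq_getElem _ _ (Nat.lt_of_succ_lt hj), List.getD_eq_getElem _ _ hj]
  exact List.isChain_iff_getElem.1 hl j hj

/-- The walk `n` on `[0, m]` (stepping up at time `j` iff `up j`) can turn upwards only at `0`
and downwards only at `m`, so it is the sawtooth `0, 1, …, m, …, 1, 0`. -/
lemma two_mul_le_of_sawtooth {m N : ℕ} {n : ℕ → ℕ} {up : ℕ → Prop} (hm : 0 < m)
    (h₀ : n 0 = 0) (hle : ∀ j ≤ N, n j ≤ m) (hup : ∀ j < N, up j → n (j + 1) = n j + 1)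
    (hdown : ∀ j < N, ¬ up j → n (j + 1) + 1 = n j)
    (hturn_up : ∀ j, j + 1 < N → ¬ up j → up (j + 1) → n (j + 1) = 0)
    (hturn_down : ∀ j, j + 1 < N → up j → ¬ up (j + 1) → n (j + 1) = m)
    (hN : 0 < N) (hnN : n N = 0) : 2 * m ≤ N ∧ n (2 * m) = 0 := by
  have key : ∀ r ≤ N, r ≤ 2 * m →
      n r = min r (2 * m - r) ∧ ∀ r', r = r' + 1 → (up r' ↔ r ≤ m) := by
    intro r
    induction r with
    | zero => intro _ _; simp [h₀]
    | succ r ih =>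
      intro hrN hrm
      obtain ⟨hn, hprev⟩ := ih (by omega) (by omega)
      have hupr : up r ↔ r + 1 ≤ m := by
        rcases r with _ | r
        · exact iff_of_true (by_contra fun h => by have := hdown 0 hN h; omega) (by omega)
        · have hr := hprev r rfl
          by_cases h : up (r + 1)
          · refine iff_of_true h ?_
            by_contra hm'
            by_cases hr' : up r
            · have := hr.1 hr'; have := hup (r + 1) (by omega) h; have := hle (r + 1 + 1) hrN
              omega
            · have := hturn_up r (by omega) hr' h; omega
          · refine iff_of_false h fun hm' => ?_
            have := hturn_down r (by omega) (hr.2 (by omega)) h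
            omega
      refine ⟨?_, fun r' hr' => by rw [← Nat.succ.inj hr']; exact hupr⟩
      by_cases h : up r
      · have := hup r (by omega) h; have := hupr.1 h; omega
      · have := hdown r (by omega) h; have := mt hupr.2 h; omega
  have h2m : 2 * m ≤ N := by
    by_contra h
    have := (key N le_rfl (by omega)).1
    omega
  exact ⟨h2m, by have := (key (2 * m) h2m le_rfl).1; omega⟩

/-- A nonnegative integer matrix `!![a, b; c, d]` of determinant one whose inverse
`!![d, -b; -c, a]` has columns of constant sign is the identity. -/
lemma Int.eq_one_of_det_eq_one_of_inv_cols {a b c d : ℤ} (ha : 0 ≤ a) (hb : 0 ≤ b)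
    (hc : 0 ≤ c) (hd : 0 ≤ d) (hdet : a * d - b * c = 1)
    (h₁ : (0 ≤ d ∧ 0 ≤ -c) ∨ (d ≤ 0 ∧ -c ≤ 0))
    (h₂ : (0 ≤ -b ∧ 0 ≤ a) ∨ (-b ≤ 0 ∧ a ≤ 0)) :
    a = 1 ∧ b = 0 ∧ c = 0 ∧ d = 1 := by
  have hc₀ : c = 0 := by
    rcases h₁ with h | h
    · omega
    · nlinarith [mul_nonneg hb hc]
  have hb₀ : b = 0 := by
    rcases h₂ with h | h
    · omega
    · nlinarith [mul_nonneg hb hc]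
  subst hb₀ hc₀
  have ha₁ := Int.eq_one_of_mul_eq_one_right ha (by simpa using hdet)
  subst ha₁
  exact ⟨rfl, rfl, rfl, by simpa using hdet⟩

namespace CartanScheme

section Vectors

variable {I : Type} [DecidableEq I] {s t : I}

lemma single_nonneg (j : I) : (0 : I → ℤ) ≤ Pi.single j 1 := Pi.single_nonneg.2 zero_le_one

lemma eq_add_of_support_subset_pair (hst : s ≠ t) {v : I → ℤ}
    (hv : Function.support v ⊆ {s, t}) : v = v s • Pi.single s 1 + v t • Pi.single t 1 := by
  rw [Function.support_subset_iff'] at hv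
  ext k
  by_cases hks : k = s
  · subst hks; simp [hst]
  by_cases hkt : k = t
  · subst hkt; simp [hks]
  simp [hks, hkt, hv k (by simp [hks, hkt])]

lemma smul_single_add_smul_single_nonneg_iff (hst : s ≠ t) {x y : ℤ} :
    0 ≤ x • Pi.single s 1 + y • (Pi.single t 1 : I → ℤ) ↔ 0 ≤ x ∧ 0 ≤ y := by
  refine ⟨fun h => ⟨by simpa [hst] using h s, by simpa [Ne.symm hst] using h t⟩, fun h => ?_⟩
  exact add_nonneg (smul_nonneg h.1 (single_nonneg s)) (smul_nonneg h.2 (single_nonneg t))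

lemma smul_single_add_smul_single_nonpos_iff (hst : s ≠ t) {x y : ℤ} :
    x • Pi.single s 1 + y • (Pi.single t 1 : I → ℤ) ≤ 0 ↔ x ≤ 0 ∧ y ≤ 0 := by
  refine ⟨fun h => ⟨by simpa [hst] using h s, by simpa [Ne.symm hst] using h t⟩, fun h => ?_⟩
  exact add_nonpos (smul_nonpos_of_nonpos_of_nonneg h.1 (single_nonneg s))
    (smul_nonpos_of_nonpos_of_nonneg h.2 (single_nonneg t))

def planeDet (s t : I) (f : (I → ℤ) → (I → ℤ)) : ℤ :=
  f (Pi.single s 1) s * f (Pi.single t 1) t - f (Pi.single s 1) t * f (Pi.single t 1) s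

lemma planeDet_comm (f : (I → ℤ) → (I → ℤ)) : planeDet t s f = planeDet s t f := by
  unfold planeDet; ring

end Vectors

section AlternatingWords

variable {I : Type} {s t : I}

lemma and_of_ne_of_mem_pair {c d : I} (hcd : c ≠ d) (hc : c ∈ ({s, t} : Set I))
    (hd : d ∈ ({s, t} : Set I)) {P : I → Prop} (h₁ : P c) (h₂ : P d) : P s ∧ P t := by
  rcases hc with rfl | rfl <;> rcases hd with rfl | rfl
  exacts [absurd rfl hcd, ⟨h₁, h₂⟩, ⟨h₂, h₁⟩, absurd rfl hcd]

def altWord (a b : I) : ℕ → List I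
  | 0 => []
  | r + 1 => a :: b :: altWord a b r

lemma eq_altWord {a b : I} {r : ℕ} {W : List I} (hW : ∀ c ∈ W, c ∈ ({a, b} : Set I))
    (hchain : W.IsChain (· ≠ ·)) (hhead : W.head? ≠ some b) (hlen : W.length = 2 * r) :
    W = altWord a b r := by
  induction r generalizing W with
  | zero => simpa [altWord] using hlen
  | succ r ih =>
    rcases W with _ | ⟨c₁, _ | ⟨c₂, W⟩⟩
    · simp at hlen
    · simp at hlen; omega
    obtain ⟨h₁₂, hchain'⟩ := List.isChain_cons_cons.1 hchain
    have hc₁ : c₁ = a := (hW c₁ (by simp)).resolve_right fun h => hhead (by simp_all)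
    have hc₂ : c₂ = b := (hW c₂ (by simp)).resolve_left fun h => h₁₂ (hc₁.trans h.symm)
    subst hc₁ hc₂
    rw [altWord, ih (fun c hc => hW c (by simp [hc])) (List.isChain_cons.1 hchain').2
      (fun h => (List.isChain_cons.1 hchain').1 _ h rfl) (by simpa [Nat.mul_succ] using hlen)]

end AlternatingWords

variable {I A : Type} [Fintype I] [DecidableEq I] [Fintype A] [Nonempty A]
variable {C : CartanScheme I A}

section Reflections

def pairing (C : CartanScheme I A) (a : A) (i : I) (v : I → ℤ) : ℤ := ∑ j, C.c a i j * v j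

lemma sigma_eq (a : A) (i : I) (v : I → ℤ) :
    C.sigma a i v = v - C.pairing a i v • Pi.single i 1 := by
  ext k
  by_cases hk : k = i
  · subst hk; simp [sigma, pairing]
  · simp [sigma, hk]

lemma sigma_apply_of_ne (a : A) {i k : I} (hk : k ≠ i) (v : I → ℤ) :
    C.sigma a i v k = v k := by
  simp [sigma, hk]

lemma pairing_add (a : A) (i : I) (u v : I → ℤ) :
    C.pairing a i (u + v) = C.pairing a i u + C.pairing a i v := by
  simp [pairing, mul_add, Finset.sum_add_distrib]

lemma pairing_smul (a : A) (i : I) (z : ℤ) (v : I → ℤ) :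
    C.pairing a i (z • v) = z * C.pairing a i v := by
  simp [pairing, Finset.mul_sum, mul_left_comm]

lemma pairing_single (a : A) (i j : I) : C.pairing a i (Pi.single j 1) = C.c a i j := by
  simp [pairing, Pi.single_apply]

lemma pairing_single_self (a : A) (i : I) : C.pairing a i (Pi.single i 1) = 2 := by
  rw [pairing_single, C.c_diag]

lemma sigma_add (a : A) (i : I) (u v : I → ℤ) :
    C.sigma a i (u + v) = C.sigma a i u + C.sigma a i v := by
  simp only [sigma_eq, pairing_add, add_smul]; abel

lemma sigma_smul (a : A) (i : I) (z : ℤ) (v : I → ℤ) :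
    C.sigma a i (z • v) = z • C.sigma a i v := by
  simp only [sigma_eq, pairing_smul, smul_sub, mul_smul]

lemma sigma_single_self (a : A) (i : I) : C.sigma a i (Pi.single i 1) = -Pi.single i 1 := by
  rw [sigma_eq, pairing_single_self]; abel

lemma pairing_sigma (a : A) (i : I) (v : I → ℤ) :
    C.pairing a i (C.sigma a i v) = -C.pairing a i v := by
  rw [sigma_eq, sub_eq_add_neg, pairing_add, ← neg_smul, pairing_smul, pairing_single_self]; ring

lemma sigma_rho_sigma (a : A) (i : I) (v : I → ℤ) :
    C.sigma (C.ρ i a) i (C.sigma a i v) = v := by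
  have hrow : ∀ u, C.pairing (C.ρ i a) i u = C.pairing a i u := fun u => by
    simp [pairing, C.c_rho]
  rw [sigma_eq (C.ρ i a), hrow, pairing_sigma, sigma_eq, neg_smul, sub_neg_eq_add, sub_add_cancel]

lemma sigma_sigma_rho (a : A) (i : I) (v : I → ℤ) :
    C.sigma a i (C.sigma (C.ρ i a) i v) = v := by
  simpa only [C.ρ_invol] using sigma_rho_sigma (C := C) (C.ρ i a) i v

end Reflections

section Words

lemma wordTarget_cons (a : A) (i : I) (l : List I) :
    C.wordTarget a (i :: l) = C.ρ i (C.wordTarget a l) := rfl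

lemma wordMap_cons (a : A) (i : I) (l : List I) :
    C.wordMap a (i :: l) = C.sigma (C.wordTarget a l) i ∘ C.wordMap a l := rfl

lemma wordTarget_concat (a : A) (l : List I) (c : I) :
    C.wordTarget a (l ++ [c]) = C.wordTarget (C.ρ c a) l := by
  classical
  exact C.wordTarget_append a l [c]

lemma wordMap_concat (a : A) (l : List I) (c : I) :
    C.wordMap a (l ++ [c]) = C.wordMap (C.ρ c a) l ∘ C.sigma a c := by
  classical
  rw [C.wordMap_append]; rfl

lemma wordMap_add (a : A) (l : List I) (u v : I → ℤ) :
    C.wordMap a l (u + v) = C.wordMap a l u + C.wordMap a l v := by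
  induction l with
  | nil => rfl
  | cons i l ih => simp only [wordMap_cons, Function.comp_apply, ih, sigma_add]

lemma wordMap_smul (a : A) (l : List I) (z : ℤ) (v : I → ℤ) :
    C.wordMap a l (z • v) = z • C.wordMap a l v := by
  induction l with
  | nil => rfl
  | cons i l ih => simp only [wordMap_cons, Function.comp_apply, ih, sigma_smul]

lemma wordMap_neg (a : A) (l : List I) (v : I → ℤ) :
    C.wordMap a l (-v) = -C.wordMap a l v := by
  simpa using wordMap_smul (C := C) a l (-1) v

lemma wordMap_concat_single_self (a : A) (l : List I) (c : I) :
    C.wordMap a (l ++ [c]) (Pi.single c 1) = -C.wordMap (C.ρ c a) l (Pi.single c 1) := by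
  rw [wordMap_concat, Function.comp_apply, sigma_single_self, wordMap_neg]

lemma wordMap_apply_of_notMem (a : A) {l : List I} {k : I} (hk : k ∉ l) (v : I → ℤ) :
    C.wordMap a l v k = v k := by
  induction l with
  | nil => rfl
  | cons i l ih =>
    rw [List.mem_cons, not_or] at hk
    rw [wordMap_cons, Function.comp_apply, sigma_apply_of_ne _ hk.1, ih hk.2]

lemma wordTarget_reverse (a : A) (l : List I) :
    C.wordTarget (C.wordTarget a l) l.reverse = a := by
  induction l with
  | nil => rfl
  | cons i l ih => rw [List.reverse_cons, wordTarget_concat, wordTarget_cons, C.ρ_invol, ih]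

lemma wordMap_reverse (a : A) (l : List I) (v : I → ℤ) :
    C.wordMap (C.wordTarget a l) l.reverse (C.wordMap a l v) = v := by
  induction l with
  | nil => rfl
  | cons i l ih =>
    rw [List.reverse_cons, wordMap_concat, wordTarget_cons, C.ρ_invol, Function.comp_apply,
      wordMap_cons, Function.comp_apply, sigma_rho_sigma, ih]

lemma wordMap_eq_id_of_forall_single {a : A} {l : List I}
    (h : ∀ j, C.wordMap a l (Pi.single j 1) = Pi.single j 1) : C.wordMap a l = id := by
  funext v
  have hsum := map_sum (AddMonoidHom.mk' (C.wordMap a l) (wordMap_add a l))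
    (fun j => v j • Pi.single j 1) Finset.univ
  simp only [AddMonoidHom.mk'_apply, wordMap_smul, h, ← pi_eq_sum_univ'] at hsum
  exact hsum

end Words

section Roots

lemma single_mem_roots (a : A) (j : I) : (Pi.single j 1 : I → ℤ) ∈ C.roots a :=
  ⟨a, [], j, rfl, rfl⟩

lemma wordMap_mem_roots {a : A} (l : List I) {α : I → ℤ} (h : α ∈ C.roots a) :
    C.wordMap a l α ∈ C.roots (C.wordTarget a l) := by
  classical
  obtain ⟨b, l₀, j, rfl, rfl⟩ := h
  exact ⟨b, l ++ l₀, j, C.wordTarget_append .., by rw [C.wordMap_append]; rfl⟩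

lemma sigma_mem_roots {a : A} (i : I) {α : I → ℤ} (h : α ∈ C.roots a) :
    C.sigma a i α ∈ C.roots (C.ρ i a) :=
  wordMap_mem_roots [i] h

lemma ne_zero_of_mem_roots {a : A} {α : I → ℤ} (h : α ∈ C.roots a) : α ≠ 0 := by
  obtain ⟨b, l, j, rfl, rfl⟩ := h
  intro h0
  have h1 := C.wordMap_reverse b l (Pi.single j 1)
  rw [h0, show C.wordMap _ l.reverse 0 = 0 by simpa using wordMap_smul (C := C) _ l.reverse 0 0]
    at h1
  simpa using congrFun h1 j

lemma IsFRS.roots_finite (hC : C.IsFRS) (a : A) : (C.roots a).Finite := hC.1 a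

lemma IsFRS.nonneg_or_nonpos (hC : C.IsFRS) {a : A} {α : I → ℤ} (h : α ∈ C.roots a) :
    0 ≤ α ∨ α ≤ 0 :=
  hC.2.1 a α h

lemma IsFRS.nonpos_of_not_nonneg (hC : C.IsFRS) {a : A} {α : I → ℤ} (h : α ∈ C.roots a)
    (hα : ¬ 0 ≤ α) : α ≤ 0 :=
  (hC.nonneg_or_nonpos h).resolve_left hα

lemma not_nonneg_of_nonpos {a : A} {α : I → ℤ} (h : α ∈ C.roots a) (hα : α ≤ 0) :
    ¬ 0 ≤ α :=
  fun hα' => ne_zero_of_mem_roots h (le_antisymm hα hα')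

lemma IsFRS.not_nonneg_neg_iff (hC : C.IsFRS) {a : A} {α : I → ℤ} (h : α ∈ C.roots a) :
    ¬ 0 ≤ -α ↔ 0 ≤ α := by
  rw [neg_nonneg]
  rcases hC.nonneg_or_nonpos h with hα | hα
  · exact iff_of_true (fun h' => ne_zero_of_mem_roots h (le_antisymm h' hα)) hα
  · exact iff_of_false (not_not.2 hα) (not_nonneg_of_nonpos h hα)

end Roots

section PositiveRoots

lemma eq_single_of_not_nonneg_sigma (hC : C.IsFRS) {a : A} {i : I} {α : I → ℤ}
    (hα : α ∈ C.posRoots a) (hσ : ¬ 0 ≤ C.sigma a i α) : α = Pi.single i 1 := by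
  have hσneg := hC.nonpos_of_not_nonneg (sigma_mem_roots i hα.1) hσ
  have hsmul : α = α i • Pi.single i 1 := by
    ext k
    by_cases hk : k = i
    · subst hk; simp
    · have h1 : α k ≤ 0 := sigma_apply_of_ne a hk α ▸ hσneg k
      simp [hk, le_antisymm h1 (hα.2 k)]
  refine (hC.2.2.1 a i α hα.1 ⟨_, hsmul⟩).resolve_right fun h => ?_
  simpa [h] using hα.2 i

lemma sigma_ne_single_of_nonneg {a : A} {c : I} {α : I → ℤ} (hα : 0 ≤ α) :
    C.sigma a c α ≠ Pi.single c 1 := by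
  intro h
  have h' := sigma_rho_sigma (C := C) a c α
  rw [h, sigma_single_self] at h'
  simpa [← h'] using hα c

lemma sigma_mem_posRoots (hC : C.IsFRS) {a : A} {i : I} {α : I → ℤ}
    (hα : α ∈ C.posRoots a) (hne : α ≠ Pi.single i 1) :
    C.sigma a i α ∈ C.posRoots (C.ρ i a) :=
  ⟨sigma_mem_roots i hα.1, by_contra fun h => hne (eq_single_of_not_nonneg_sigma hC hα h)⟩

def posRootsIn (C : CartanScheme I A) (J : Set I) (a : A) : Set (I → ℤ) :=
  {α ∈ C.posRoots a | Function.support α ⊆ J}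

lemma posRootsIn_finite (hC : C.IsFRS) (J : Set I) (a : A) : (C.posRootsIn J a).Finite :=
  (hC.roots_finite a).subset fun _ h => h.1.1

lemma support_sigma_subset {J : Set I} {c : I} (hc : c ∈ J) (a : A) {v : I → ℤ}
    (hv : Function.support v ⊆ J) : Function.support (C.sigma a c v) ⊆ J := by
  rw [Function.support_subset_iff'] at hv ⊢
  intro k hk
  rw [sigma_apply_of_ne a (by rintro rfl; exact hk hc), hv k hk]

lemma support_wordMap_subset {J : Set I} (a : A) {l : List I} (hl : ∀ c ∈ l, c ∈ J)
    {v : I → ℤ} (hv : Function.support v ⊆ J) : Function.support (C.wordMap a l v) ⊆ J := by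
  induction l with
  | nil => exact hv
  | cons c l ih =>
    exact support_sigma_subset (hl c List.mem_cons_self) _
      (ih fun d hd => hl d (List.mem_cons_of_mem c hd))

lemma single_mem_posRootsIn {J : Set I} {c : I} (hc : c ∈ J) (a : A) :
    (Pi.single c 1 : I → ℤ) ∈ C.posRootsIn J a :=
  ⟨⟨single_mem_roots a c, single_nonneg c⟩, by simpa using hc⟩

lemma image_sigma_posRootsIn (hC : C.IsFRS) {J : Set I} {c : I} (hc : c ∈ J) (a : A) :
    C.sigma (C.ρ c a) c '' (C.posRootsIn J (C.ρ c a) \ {Pi.single c 1}) =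
      C.posRootsIn J a \ {Pi.single c 1} := by
  ext α
  constructor
  · rintro ⟨β, ⟨⟨hβ, hβJ⟩, hβc⟩, rfl⟩
    refine ⟨⟨?_, support_sigma_subset hc _ hβJ⟩, sigma_ne_single_of_nonneg hβ.2⟩
    simpa only [C.ρ_invol] using sigma_mem_posRoots hC hβ hβc
  · rintro ⟨⟨hα, hαJ⟩, hαc⟩
    have hσα : C.sigma a c α ∈ C.posRootsIn J (C.ρ c a) :=
      ⟨sigma_mem_posRoots hC hα hαc, support_sigma_subset hc _ hαJ⟩
    exact ⟨_, ⟨hσα, sigma_ne_single_of_nonneg hα.2⟩, sigma_rho_sigma a c α⟩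

lemma ncard_posRootsIn_rho (hC : C.IsFRS) {J : Set I} {c : I} (hc : c ∈ J) (a : A) :
    (C.posRootsIn J (C.ρ c a)).ncard = (C.posRootsIn J a).ncard := by
  have hinj : Function.Injective (C.sigma (C.ρ c a) c) :=
    Function.LeftInverse.injective (sigma_sigma_rho a c)
  rw [← Set.ncard_sdiff_singleton_add_one (single_mem_posRootsIn hc _)
      (posRootsIn_finite hC J _),
    ← Set.ncard_sdiff_singleton_add_one (single_mem_posRootsIn hc a) (posRootsIn_finite hC J a),
    ← image_sigma_posRootsIn hC hc a, Set.ncard_image_of_injective _ hinj]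

lemma ncard_posRootsIn_wordTarget (hC : C.IsFRS) {J : Set I} (a : A) {l : List I}
    (hl : ∀ c ∈ l, c ∈ J) :
    (C.posRootsIn J (C.wordTarget a l)).ncard = (C.posRootsIn J a).ncard := by
  induction l with
  | nil => rfl
  | cons c l ih =>
    rw [wordTarget_cons, ncard_posRootsIn_rho hC (hl c List.mem_cons_self),
      ih fun d hd => hl d (List.mem_cons_of_mem c hd)]

lemma nonneg_wordMap_single_of_notMem (hC : C.IsFRS) (a : A) {l : List I} {j : I}
    (hj : j ∉ l) : 0 ≤ C.wordMap a l (Pi.single j 1) := by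
  have hroot := wordMap_mem_roots l (single_mem_roots (C := C) a j)
  refine (hC.nonneg_or_nonpos hroot).resolve_right fun h => ?_
  simpa [wordMap_apply_of_notMem a hj] using h j

end PositiveRoots

section Inversions

def inversions (C : CartanScheme I A) (J : Set I) (a : A) (f : (I → ℤ) → (I → ℤ)) :
    Set (I → ℤ) :=
  {α ∈ C.posRootsIn J a | ¬ 0 ≤ f α}

lemma inversions_finite (hC : C.IsFRS) (J : Set I) (a : A) (f : (I → ℤ) → (I → ℤ)) :
    (C.inversions J a f).Finite :=
  (posRootsIn_finite hC J a).subset fun _ h => h.1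

lemma inversions_id (J : Set I) (a : A) : C.inversions J a id = ∅ :=
  Set.eq_empty_of_forall_notMem fun _ h => h.2 h.1.1.2

variable {J : Set I} {c : I}

lemma single_mem_inversions_concat_iff (hC : C.IsFRS) (hc : c ∈ J) (a : A) (l : List I) :
    Pi.single c 1 ∈ C.inversions J a (C.wordMap a (l ++ [c])) ↔
      0 ≤ C.wordMap (C.ρ c a) l (Pi.single c 1) := by
  rw [inversions, Set.mem_ofPred_eq, wordMap_concat_single_self,
    hC.not_nonneg_neg_iff (wordMap_mem_roots l (single_mem_roots _ c))]
  exact and_iff_right (single_mem_posRootsIn hc a)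

lemma inversions_concat_diff (hC : C.IsFRS) (hc : c ∈ J) (a : A) (l : List I) :
    C.inversions J a (C.wordMap a (l ++ [c])) \ {Pi.single c 1} =
      C.sigma (C.ρ c a) c '' (C.inversions J (C.ρ c a) (C.wordMap (C.ρ c a) l) \
        {Pi.single c 1}) := by
  ext α
  simp only [inversions, wordMap_concat, Function.comp_apply, Set.mem_sdiff, Set.mem_ofPred_eq]
  constructor
  · rintro ⟨⟨hα, hfα⟩, hαc⟩
    have hα' : α ∈ C.posRootsIn J a \ {Pi.single c 1} := ⟨hα, hαc⟩
    rw [← image_sigma_posRootsIn hC hc a] at hα'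
    obtain ⟨β, hβ, rfl⟩ := hα'
    rw [sigma_sigma_rho] at hfα
    exact ⟨β, ⟨⟨hβ.1, hfα⟩, hβ.2⟩, rfl⟩
  · rintro ⟨β, ⟨⟨hβ, hfβ⟩, hβc⟩, rfl⟩
    have hα := (image_sigma_posRootsIn hC hc a).subset ⟨β, ⟨hβ, hβc⟩, rfl⟩
    exact ⟨⟨hα.1, by rwa [sigma_sigma_rho]⟩, hα.2⟩

lemma ncard_inversions_concat_diff (hC : C.IsFRS) (hc : c ∈ J) (a : A) (l : List I) :
    (C.inversions J a (C.wordMap a (l ++ [c])) \ {Pi.single c 1}).ncard =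
      (C.inversions J (C.ρ c a) (C.wordMap (C.ρ c a) l) \ {Pi.single c 1}).ncard := by
  rw [inversions_concat_diff hC hc,
    Set.ncard_image_of_injective _ (Function.LeftInverse.injective (sigma_sigma_rho a c))]

lemma ncard_inversions_concat_of_nonneg (hC : C.IsFRS) (hc : c ∈ J) (a : A) (l : List I)
    (h : 0 ≤ C.wordMap (C.ρ c a) l (Pi.single c 1)) :
    (C.inversions J a (C.wordMap a (l ++ [c]))).ncard =
      (C.inversions J (C.ρ c a) (C.wordMap (C.ρ c a) l)).ncard + 1 := by
  rw [← Set.ncard_sdiff_singleton_add_one ((single_mem_inversions_concat_iff hC hc a l).2 h)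
      (inversions_finite hC J a _), ncard_inversions_concat_diff hC hc,
    Set.sdiff_singleton_eq_self fun hmem => hmem.2 h]

lemma ncard_inversions_concat_of_not_nonneg (hC : C.IsFRS) (hc : c ∈ J) (a : A) (l : List I)
    (h : ¬ 0 ≤ C.wordMap (C.ρ c a) l (Pi.single c 1)) :
    (C.inversions J a (C.wordMap a (l ++ [c]))).ncard + 1 =
      (C.inversions J (C.ρ c a) (C.wordMap (C.ρ c a) l)).ncard := by
  have hmem : Pi.single c 1 ∈ C.inversions J (C.ρ c a) (C.wordMap (C.ρ c a) l) :=
    ⟨single_mem_posRootsIn hc _, h⟩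
  rw [← Set.ncard_sdiff_singleton_add_one hmem (inversions_finite hC J _ _),
    ← ncard_inversions_concat_diff hC hc,
    Set.sdiff_singleton_eq_self fun hmem => h ((single_mem_inversions_concat_iff hC hc a l).1 hmem)]

lemma exists_ncard_inversions_add_two_mul (hC : C.IsFRS) (a : A) {l : List I}
    (hl : ∀ c ∈ l, c ∈ J) :
    ∃ k, (C.inversions J a (C.wordMap a l)).ncard + 2 * k = l.length := by
  induction l using List.reverseRecOn generalizing a with
  | nil => exact ⟨0, by simp [wordMap, inversions_id]⟩
  | append_singleton l c ih =>
    have hc : c ∈ J := hl c (by simp)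
    obtain ⟨k, hk⟩ := ih (C.ρ c a) fun d hd => hl d (by simp [hd])
    by_cases h : 0 ≤ C.wordMap (C.ρ c a) l (Pi.single c 1)
    · exact ⟨k, by rw [ncard_inversions_concat_of_nonneg hC hc a l h]; simp; omega⟩
    · have := ncard_inversions_concat_of_not_nonneg hC hc a l h
      exact ⟨k + 1, by simp; omega⟩

end Inversions

section Length

def wordMor (C : CartanScheme I A) (a : A) (l : List I) : Mor C :=
  ⟨a, C.wordTarget a l, C.wordMap a l, ⟨l, rfl, rfl⟩⟩

lemma realizes_wordMor (a : A) (l : List I) : Realizes (C.wordMor a l) l := ⟨rfl, rfl⟩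

lemma Realizes.wordMor_eq {w : Mor C} {l : List I} (h : Realizes w l) : C.wordMor w.src l = w :=
  Mor.ext rfl h.1 h.2

lemma wordMor_eq_wordMor_iff {a : A} {l₁ l₂ : List I} :
    C.wordMor a l₁ = C.wordMor a l₂ ↔
      C.wordTarget a l₁ = C.wordTarget a l₂ ∧ C.wordMap a l₁ = C.wordMap a l₂ := by
  simp [wordMor, Mor.ext_iff]

lemma wordMor_append_cons_cons (a : A) (l₁ l₂ : List I) (c : I) :
    C.wordMor a (l₁ ++ c :: c :: l₂) = C.wordMor a (l₁ ++ l₂) := by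
  classical
  have htgt : C.wordTarget a (c :: c :: l₂) = C.wordTarget a l₂ := C.ρ_invol c _
  have hmap : C.wordMap a (c :: c :: l₂) = C.wordMap a l₂ := by
    funext v
    exact sigma_rho_sigma _ c _
  rw [wordMor_eq_wordMor_iff, C.wordTarget_append, C.wordTarget_append, C.wordMap_append,
    C.wordMap_append, htgt, hmap]
  exact ⟨rfl, rfl⟩

lemma wordMor_concat_congr {a : A} {l₁ l₂ : List I} (c : I)
    (h : C.wordMor (C.ρ c a) l₁ = C.wordMor (C.ρ c a) l₂) :
    C.wordMor a (l₁ ++ [c]) = C.wordMor a (l₂ ++ [c]) := by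
  rw [wordMor_eq_wordMor_iff] at h ⊢
  rw [wordTarget_concat, wordTarget_concat, wordMap_concat, wordMap_concat, h.1, h.2]
  exact ⟨rfl, rfl⟩

lemma exists_realizes_length_eq_len (w : Mor C) : ∃ l, Realizes w l ∧ l.length = len w :=
  Nat.sInf_mem (s := {k | ∃ l : List I, Realizes w l ∧ l.length = k})
    (let ⟨l, hl⟩ := w.spec; ⟨l.length, l, hl, rfl⟩)

lemma len_le_length {w : Mor C} {l : List I} (h : Realizes w l) : len w ≤ l.length :=
  Nat.sInf_le ⟨l, h, rfl⟩

lemma Mor.toFun_add (w : Mor C) (u v : I → ℤ) : w.toFun (u + v) = w.toFun u + w.toFun v := by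
  obtain ⟨l, hl⟩ := w.spec
  rw [← hl.2, wordMap_add]

lemma Mor.toFun_smul (w : Mor C) (z : ℤ) (v : I → ℤ) :
    w.toFun (z • v) = z • w.toFun v := by
  obtain ⟨l, hl⟩ := w.spec
  rw [← hl.2, wordMap_smul]

def Mor.compSigma (w : Mor C) (c : I) : Mor C where
  src := C.ρ c w.src
  tgt := w.tgt
  toFun := w.toFun ∘ C.sigma (C.ρ c w.src) c
  spec := by
    obtain ⟨l, hl₁, hl₂⟩ := w.spec
    refine ⟨l ++ [c], ?_, ?_⟩
    · rw [wordTarget_concat, C.ρ_invol, hl₁]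
    · rw [wordMap_concat, C.ρ_invol, hl₂]

lemma Realizes.compSigma {w : Mor C} {l : List I} (h : Realizes w l) (c : I) :
    Realizes (w.compSigma c) (l ++ [c]) := by
  refine ⟨?_, ?_⟩
  · simp only [Mor.compSigma, wordTarget_concat, C.ρ_invol, h.1]
  · simp only [Mor.compSigma, wordMap_concat, C.ρ_invol, h.2]

lemma Mor.compSigma_compSigma (w : Mor C) (c : I) : (w.compSigma c).compSigma c = w := by
  ext v
  · exact C.ρ_invol c w.src
  · rfl
  · simp only [Mor.compSigma, Function.comp_apply, C.ρ_invol, sigma_rho_sigma]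

lemma wordMor_concat (a : A) (l : List I) (c : I) :
    C.wordMor a (l ++ [c]) = (C.wordMor (C.ρ c a) l).compSigma c := by
  ext v
  · exact (C.ρ_invol c a).symm
  · exact wordTarget_concat a l c
  · simp only [wordMor, Mor.compSigma, wordMap_concat, C.ρ_invol]

lemma len_compSigma_le (w : Mor C) (c : I) : len (w.compSigma c) ≤ len w + 1 := by
  obtain ⟨l, hl, hlen⟩ := exists_realizes_length_eq_len w
  simpa [hlen] using len_le_length (hl.compSigma c)

lemma length_mod_two_eq (hC : C.IsFRS) {w : Mor C} {l₁ l₂ : List I} (h₁ : Realizes w l₁)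
    (h₂ : Realizes w l₂) : l₁.length % 2 = l₂.length % 2 := by
  obtain ⟨k₁, hk₁⟩ := exists_ncard_inversions_add_two_mul hC (J := Set.univ) w.src
    (l := l₁) fun _ _ => trivial
  obtain ⟨k₂, hk₂⟩ := exists_ncard_inversions_add_two_mul hC (J := Set.univ) w.src
    (l := l₂) fun _ _ => trivial
  rw [h₁.2] at hk₁
  rw [h₂.2] at hk₂
  omega

lemma len_compSigma_eq (hC : C.IsFRS) (w : Mor C) (c : I) :
    len (w.compSigma c) = len w + 1 ∨ len (w.compSigma c) + 1 = len w := by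
  have h₁ := len_compSigma_le w c
  have h₂ := len_compSigma_le (w.compSigma c) c
  rw [Mor.compSigma_compSigma] at h₂
  obtain ⟨l, hl, hlen⟩ := exists_realizes_length_eq_len w
  obtain ⟨l', hl', hlen'⟩ := exists_realizes_length_eq_len (w.compSigma c)
  have hpar := length_mod_two_eq hC (hl.compSigma c) hl'
  simp only [List.length_append, List.length_singleton] at hpar
  omega

lemma exists_eq_compSigma_of_len_ne_zero {w : Mor C} (hw : len w ≠ 0) :
    ∃ u t, w = u.compSigma t ∧ len w = len u + 1 := by
  obtain ⟨l, hl, hlen⟩ := exists_realizes_length_eq_len w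
  obtain ⟨m, t, rfl⟩ := (List.eq_nil_or_concat' l).resolve_left (by rintro rfl; simp_all)
  have hw : w = (C.wordMor (C.ρ t w.src) m).compSigma t :=
    hl.wordMor_eq.symm.trans (wordMor_concat _ _ _)
  refine ⟨_, t, hw, le_antisymm ?_ ?_⟩
  · have := len_compSigma_le (C.wordMor (C.ρ t w.src) m) t
    rwa [← hw] at this
  · have := len_le_length (realizes_wordMor (C := C) (C.ρ t w.src) m)
    simp only [List.length_append, List.length_singleton] at hlen
    omega

/-- `w = u p`, the word `p` being read from `w.src`. -/
def Factors (w u : Mor C) (p : List I) : Prop :=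
  C.wordTarget w.src p = u.src ∧ u.tgt = w.tgt ∧ w.toFun = u.toFun ∘ C.wordMap w.src p

lemma factors_compSigma (u : Mor C) (c : I) : Factors (u.compSigma c) u [c] :=
  ⟨C.ρ_invol c u.src, rfl, rfl⟩

lemma Factors.compSigma_left {w u : Mor C} {p : List I} (h : Factors w u p) (c : I) :
    Factors w (u.compSigma c) (c :: p) := by
  obtain ⟨h₁, h₂, h₃⟩ := h
  refine ⟨by rw [wordTarget_cons, h₁]; rfl, h₂, funext fun v => ?_⟩
  simp only [h₃, Mor.compSigma, wordMap_cons, Function.comp_apply, h₁, sigma_rho_sigma]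

lemma Factors.compSigma_right {w u : Mor C} {p : List I} (h : Factors w u p) (c : I) :
    Factors (w.compSigma c) u (p ++ [c]) := by
  obtain ⟨h₁, h₂, h₃⟩ := h
  refine ⟨?_, h₂, ?_⟩
  · simp only [Mor.compSigma, wordTarget_concat, C.ρ_invol, h₁]
  · simp only [Mor.compSigma, wordMap_concat, C.ρ_invol, h₃, Function.comp_assoc]

lemma Factors.of_wordMor_eq {w u : Mor C} {p q : List I} (h : Factors w u p)
    (hq : C.wordMor w.src q = C.wordMor w.src p) : Factors w u q := by
  rw [wordMor_eq_wordMor_iff] at hq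
  exact ⟨hq.1.trans h.1, h.2.1, hq.2 ▸ h.2.2⟩

lemma Factors.len_le {w u : Mor C} {p : List I} (h : Factors w u p) :
    len w ≤ len u + p.length := by
  classical
  obtain ⟨l, hl, hlen⟩ := exists_realizes_length_eq_len u
  refine hlen ▸ (len_le_length (l := l ++ p) ⟨?_, ?_⟩).trans (List.length_append ..).le
  · rw [C.wordTarget_append, h.1, hl.1, h.2.1]
  · rw [C.wordMap_append, h.1, hl.2, h.2.2]

end Length

section RankTwo

variable {s t : I}

lemma Mor.toFun_apply_of_support_subset_pair (hst : s ≠ t) (w : Mor C) {v : I → ℤ}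
    (hv : Function.support v ⊆ {s, t}) :
    w.toFun v = v s • w.toFun (Pi.single s 1) + v t • w.toFun (Pi.single t 1) := by
  conv_lhs => rw [eq_add_of_support_subset_pair hst hv]
  rw [w.toFun_add, w.toFun_smul, w.toFun_smul]

lemma Mor.nonneg_toFun_of_support_subset_pair (hst : s ≠ t) (w : Mor C) {v : I → ℤ}
    (hv : Function.support v ⊆ {s, t}) (hv₀ : 0 ≤ v) (hs : 0 ≤ w.toFun (Pi.single s 1))
    (ht : 0 ≤ w.toFun (Pi.single t 1)) : 0 ≤ w.toFun v := by
  rw [w.toFun_apply_of_support_subset_pair hst hv]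
  exact add_nonneg (smul_nonneg (hv₀ s) hs) (smul_nonneg (hv₀ t) ht)

lemma inversions_eq_empty_of_nonneg (hst : s ≠ t) (a : A) (l : List I)
    (hs : 0 ≤ C.wordMap a l (Pi.single s 1)) (ht : 0 ≤ C.wordMap a l (Pi.single t 1)) :
    C.inversions {s, t} a (C.wordMap a l) = ∅ :=
  Set.eq_empty_of_forall_notMem fun _ ⟨⟨hα, hαJ⟩, hfα⟩ =>
    hfα ((C.wordMor a l).nonneg_toFun_of_support_subset_pair hst hαJ hα.2 hs ht)

lemma inversions_eq_posRootsIn_of_nonpos (hst : s ≠ t) (a : A) (l : List I)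
    (hs : C.wordMap a l (Pi.single s 1) ≤ 0) (ht : C.wordMap a l (Pi.single t 1) ≤ 0) :
    C.inversions {s, t} a (C.wordMap a l) = C.posRootsIn {s, t} a := by
  refine Set.eq_of_subset_of_subset (fun _ h => h.1) fun α hα => ⟨hα, ?_⟩
  apply not_nonneg_of_nonpos (wordMap_mem_roots l hα.1.1)
  have := (C.wordMor a l).toFun_apply_of_support_subset_pair hst hα.2
  simp only [wordMor] at this
  rw [this]
  exact add_nonpos (smul_nonpos_of_nonneg_of_nonpos (hα.1.2 s) hs)
    (smul_nonpos_of_nonneg_of_nonpos (hα.1.2 t) ht)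

lemma inversions_concat_eq_empty_of_turn (hC : C.IsFRS) (hst : s ≠ t) {c d : I} (hcd : c ≠ d)
    (hc : c ∈ ({s, t} : Set I)) (hd : d ∈ ({s, t} : Set I)) (a : A) (l : List I)
    (h₁ : ¬ 0 ≤ C.wordMap (C.ρ c a) l (Pi.single c 1))
    (h₂ : 0 ≤ C.wordMap a (l ++ [c]) (Pi.single d 1)) :
    C.inversions {s, t} a (C.wordMap a (l ++ [c])) = ∅ := by
  have h₁' : 0 ≤ C.wordMap a (l ++ [c]) (Pi.single c 1) := by
    rw [wordMap_concat_single_self, neg_nonneg]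
    exact hC.nonpos_of_not_nonneg (wordMap_mem_roots l (single_mem_roots _ c)) h₁
  obtain ⟨hs, ht⟩ := and_of_ne_of_mem_pair hcd hc hd
    (P := fun i => 0 ≤ C.wordMap a (l ++ [c]) (Pi.single i 1)) h₁' h₂
  exact inversions_eq_empty_of_nonneg hst a _ hs ht

lemma inversions_concat_eq_posRootsIn_of_turn (hC : C.IsFRS) (hst : s ≠ t) {c d : I}
    (hcd : c ≠ d) (hc : c ∈ ({s, t} : Set I)) (hd : d ∈ ({s, t} : Set I)) (a : A) (l : List I)
    (h₁ : 0 ≤ C.wordMap (C.ρ c a) l (Pi.single c 1))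
    (h₂ : ¬ 0 ≤ C.wordMap a (l ++ [c]) (Pi.single d 1)) :
    C.inversions {s, t} a (C.wordMap a (l ++ [c])) = C.posRootsIn {s, t} a := by
  have h₁' : C.wordMap a (l ++ [c]) (Pi.single c 1) ≤ 0 := by
    rwa [wordMap_concat_single_self, neg_nonpos]
  obtain ⟨hs, ht⟩ := and_of_ne_of_mem_pair hcd hc hd
    (P := fun i => C.wordMap a (l ++ [c]) (Pi.single i 1) ≤ 0) h₁'
    (hC.nonpos_of_not_nonneg (wordMap_mem_roots _ (single_mem_roots _ d)) h₂)
  exact inversions_eq_posRootsIn_of_nonpos hst a _ hs ht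

lemma pairing_of_support_subset_pair (hst : s ≠ t) (a : A) (i : I) {v : I → ℤ}
    (hv : Function.support v ⊆ {s, t}) : C.pairing a i v = C.c a i s * v s + C.c a i t * v t := by
  conv_lhs => rw [eq_add_of_support_subset_pair hst hv]
  rw [pairing_add, pairing_smul, pairing_smul, pairing_single, pairing_single]
  ring

lemma planeDet_sigma_comp (hst : s ≠ t) (x : A) {f : (I → ℤ) → (I → ℤ)}
    (hs : Function.support (f (Pi.single s 1)) ⊆ {s, t})
    (ht : Function.support (f (Pi.single t 1)) ⊆ {s, t}) :
    planeDet s t (C.sigma x s ∘ f) = -planeDet s t f := by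
  simp only [planeDet, Function.comp_apply, sigma_apply_of_ne x hst.symm, sigma_eq,
    Pi.sub_apply, Pi.smul_apply, smul_eq_mul, Pi.single_eq_same,
    pairing_of_support_subset_pair hst x s hs, pairing_of_support_subset_pair hst x s ht, C.c_diag]
  ring

lemma planeDet_wordMap (hst : s ≠ t) (a : A) {l : List I}
    (hl : ∀ c ∈ l, c ∈ ({s, t} : Set I)) :
    planeDet s t (C.wordMap a l) = (-1) ^ l.length := by
  induction l with
  | nil => simp [planeDet, wordMap, hst, Ne.symm hst]
  | cons c l ih =>
    have hl' : ∀ d ∈ l, d ∈ ({s, t} : Set I) := fun d hd => hl d (List.mem_cons_of_mem c hd)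
    have hsupp : ∀ j ∈ ({s, t} : Set I),
        Function.support (C.wordMap a l (Pi.single j 1)) ⊆ {s, t} := fun j hj =>
      support_wordMap_subset a hl' (by simpa using hj)
    rw [wordMap_cons, List.length_cons, pow_succ, mul_neg_one, ← ih hl']
    rcases hl c List.mem_cons_self with rfl | rfl
    · exact planeDet_sigma_comp hst _ (hsupp _ (by simp)) (hsupp _ (by simp))
    · rw [← planeDet_comm, planeDet_sigma_comp (Ne.symm hst) _
        (Set.pair_comm s c ▸ hsupp _ (by simp)) (Set.pair_comm s c ▸ hsupp _ (by simp)),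
        planeDet_comm]

lemma wordMap_single_eq_of_inversions_eq_empty (hC : C.IsFRS) (hst : s ≠ t) (a : A)
    {l : List I} (hl : ∀ c ∈ l, c ∈ ({s, t} : Set I))
    (h₀ : C.inversions {s, t} a (C.wordMap a l) = ∅) :
    C.wordMap a l (Pi.single s 1) = Pi.single s 1 ∧
      C.wordMap a l (Pi.single t 1) = Pi.single t 1 := by
  have hexp : ∀ j ∈ ({s, t} : Set I), ∃ x y : ℤ,
      C.wordMap a l (Pi.single j 1) = x • Pi.single s 1 + y • Pi.single t 1 := fun j hj =>
    ⟨_, _, eq_add_of_support_subset_pair hst (support_wordMap_subset a hl (by simpa using hj))⟩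
  obtain ⟨p, r, hfs⟩ := hexp s (by simp)
  obtain ⟨q, u, hft⟩ := hexp t (by simp)
  have hf : ∀ x y : ℤ, C.wordMap a l (x • Pi.single s 1 + y • Pi.single t 1) =
      (x * p + y * q) • Pi.single s 1 + (x * r + y * u) • Pi.single t 1 := by
    intro x y
    rw [wordMap_add, wordMap_smul, wordMap_smul, hfs, hft]
    module
  have hdet : p * u - q * r = 1 := by
    obtain ⟨k, hk⟩ := exists_ncard_inversions_add_two_mul hC a hl
    rw [h₀, Set.ncard_empty, zero_add] at hk
    have := planeDet_wordMap (C := C) hst a hl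
    rw [← hk, pow_mul, neg_one_sq, one_pow] at this
    simp [planeDet, hfs, hft, hst, Ne.symm hst] at this
    linarith
  -- The preimages `u α_s - r α_t` and `-q α_s + p α_t` of `α_s` and `α_t` are roots.
  have hsign : ∀ (j : I) (x y : ℤ),
      C.wordMap a l (x • Pi.single s 1 + y • Pi.single t 1) = Pi.single j 1 →
        (0 ≤ x ∧ 0 ≤ y) ∨ (x ≤ 0 ∧ y ≤ 0) := by
    intro j x y h
    have hroot := wordMap_mem_roots l.reverse (single_mem_roots (C := C) (C.wordTarget a l) j)
    rw [wordTarget_reverse, ← h, C.wordMap_reverse a l] at hroot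
    simpa only [smul_single_add_smul_single_nonneg_iff hst,
      smul_single_add_smul_single_nonpos_iff hst] using hC.nonneg_or_nonpos hroot
  have hnonneg : ∀ j ∈ ({s, t} : Set I), 0 ≤ C.wordMap a l (Pi.single j 1) := fun j hj =>
    by_contra fun h => Set.eq_empty_iff_forall_notMem.1 h₀ _ ⟨single_mem_posRootsIn hj a, h⟩
  obtain ⟨hp, hr⟩ := (smul_single_add_smul_single_nonneg_iff hst).1 (hfs ▸ hnonneg s (by simp))
  obtain ⟨hq, hu⟩ := (smul_single_add_smul_single_nonneg_iff hst).1 (hft ▸ hnonneg t (by simp))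
  obtain ⟨rfl, rfl, rfl, rfl⟩ := Int.eq_one_of_det_eq_one_of_inv_cols hp hq hr hu hdet
    (hsign s u (-r) (by rw [hf]; ext k; simp [Pi.single_apply]; split_ifs <;> linarith))
    (hsign t (-q) p (by rw [hf]; ext k; simp [Pi.single_apply]; split_ifs <;> linarith))
  simp [hfs, hft]

lemma wordMap_eq_id_of_inversions_eq_empty (hC : C.IsFRS) (hst : s ≠ t) (a : A)
    {l : List I} (hl : ∀ c ∈ l, c ∈ ({s, t} : Set I))
    (h₀ : C.inversions {s, t} a (C.wordMap a l) = ∅) : C.wordMap a l = id := by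
  obtain ⟨hs, ht⟩ := wordMap_single_eq_of_inversions_eq_empty hC hst a hl h₀
  have hgf : ∀ v, C.wordMap (C.wordTarget a l) l.reverse (C.wordMap a l v) = v :=
    C.wordMap_reverse a l
  refine wordMap_eq_id_of_forall_single fun j => ?_
  rcases eq_or_ne j s with rfl | hjs
  · exact hs
  rcases eq_or_ne j t with rfl | hjt
  · exact ht
  have hnotMem : ∀ k, k ≠ s → k ≠ t → k ∉ l := fun k hks hkt hk => by
    rcases hl k hk with h | h
    exacts [hks h, hkt h]
  set x := C.wordMap a l (Pi.single j 1) s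
  set y := C.wordMap a l (Pi.single j 1) t
  have hdecomp : C.wordMap a l (Pi.single j 1) =
      Pi.single j 1 + (x • Pi.single s 1 + y • Pi.single t 1) := by
    ext k
    by_cases hks : k = s
    · subst hks; simp [x, hst, Ne.symm hjs]
    by_cases hkt : k = t
    · subst hkt; simp [y, hks, Ne.symm hjt]
    rw [wordMap_apply_of_notMem a (hnotMem k hks hkt)]
    simp [hks, hkt]
  have hg : C.wordMap (C.wordTarget a l) l.reverse (Pi.single j 1) =
      Pi.single j 1 - (x • Pi.single s 1 + y • Pi.single t 1) := by
    have h := hgf (Pi.single j 1)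
    conv_lhs at h => rw [hdecomp, wordMap_add, wordMap_add, wordMap_smul, wordMap_smul,
      ← hs, hgf, ← ht, hgf]
    exact eq_sub_of_add_eq h
  have hf₀ := nonneg_wordMap_single_of_notMem hC a (hnotMem j hjs hjt)
  have hg₀ := nonneg_wordMap_single_of_notMem hC (C.wordTarget a l)
    (l := l.reverse) (j := j) (by simpa using hnotMem j hjs hjt)
  rw [hg] at hg₀
  have hx : x = 0 := le_antisymm (by simpa [hst, Ne.symm hjs] using hg₀ s) (hf₀ s)
  have hy : y = 0 := le_antisymm (by simpa [Ne.symm hst, Ne.symm hjt] using hg₀ t) (hf₀ t)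
  rw [hdecomp, hx, hy]
  simp

lemma wordTarget_altWord (x : A) (a b : I) (r : ℕ) :
    C.wordTarget x (altWord a b r) = (fun y => C.ρ a (C.ρ b y))^[r] x := by
  induction r with
  | zero => rfl
  | succ r ih => rw [altWord, wordTarget_cons, wordTarget_cons, ih, Function.iterate_succ_apply']

lemma roots_inter_quadrant (hst : s ≠ t) (x : A) :
    C.roots x ∩
        {α | ∃ m n : ℕ, α = (m : ℤ) • Pi.single s 1 + (n : ℤ) • Pi.single t 1} =
      C.posRootsIn {s, t} x := by
  ext α
  constructor
  · rintro ⟨hα, m, n, rfl⟩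
    refine ⟨⟨hα, ?_⟩, ?_⟩
    · exact (smul_single_add_smul_single_nonneg_iff hst).2 ⟨by positivity, by positivity⟩
    · intro k hk
      by_contra hkst
      simp only [Set.mem_insert_iff, Set.mem_singleton_iff, not_or] at hkst
      simp [hkst.1, hkst.2] at hk
  · rintro ⟨⟨hα, hα₀⟩, hαJ⟩
    refine ⟨hα, (α s).toNat, (α t).toNat, ?_⟩
    rw [Int.toNat_of_nonneg (hα₀ s), Int.toNat_of_nonneg (hα₀ t)]
    exact eq_add_of_support_subset_pair hst hαJ

/-- This is where axiom (R4), `(ρ_s ρ_t)^{m_{st}} = id`, enters. -/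
lemma wordTarget_eq_of_isChain_of_length_eq (hC : C.IsFRS) (hst : s ≠ t) (x : A) {W : List I}
    (hW : ∀ c ∈ W, c ∈ ({s, t} : Set I)) (hchain : W.IsChain (· ≠ ·))
    (hlen : W.length = 2 * (C.posRootsIn {s, t} x).ncard) : C.wordTarget x W = x := by
  by_cases hhead : W.head? = some t
  · have hW' : ∀ c ∈ W, c ∈ ({t, s} : Set I) := Set.pair_comm s t ▸ hW
    rw [eq_altWord hW' hchain (by rw [hhead]; simpa using hst.symm) hlen, wordTarget_altWord,
      Set.pair_comm, ← roots_inter_quadrant hst.symm]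
    exact hC.2.2.2 x t s hst.symm
  · rw [eq_altWord hW hchain hhead hlen, wordTarget_altWord, ← roots_inter_quadrant hst]
    exact hC.2.2.2 x s t hst

/-- Reading the alternating word `W = c₀ c₁ ⋯` from the left, the numbers of inversions of
the prefixes `c₀ ⋯ c_{j-1}` (with source `wordTarget x (W.drop j)`) follow a sawtooth of
height `m`. -/
lemma inversions_take_eq_empty_of_isChain (hC : C.IsFRS) (hst : s ≠ t) (x : A) {W : List I}
    (hW : ∀ c ∈ W, c ∈ ({s, t} : Set I)) (hchain : W.IsChain (· ≠ ·)) (hW₀ : W ≠ [])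
    (hid : C.wordMap x W = id) {m : ℕ} (hm : (C.posRootsIn {s, t} x).ncard = m) :
    2 * m ≤ W.length ∧ C.inversions {s, t} (C.wordTarget x (W.drop (2 * m)))
      (C.wordMap (C.wordTarget x (W.drop (2 * m))) (W.take (2 * m))) = ∅ := by
  set N := W.length with hN
  let xs : ℕ → A := fun j => C.wordTarget x (W.drop j)
  let f : ℕ → (I → ℤ) → (I → ℤ) := fun j => C.wordMap (xs j) (W.take j)
  let n : ℕ → ℕ := fun j => (C.inversions {s, t} (xs j) (f j)).ncard
  let c : ℕ → I := fun j => W.getD j s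
  let up : ℕ → Prop := fun j => 0 ≤ f j (Pi.single (c j) 1)
  have hc : ∀ j < N, c j ∈ ({s, t} : Set I) := fun j hj => hW _ (W.getD_mem_of_lt s hj)
  have hxs : ∀ j < N, xs j = C.ρ (c j) (xs (j + 1)) := fun j hj => by
    simp only [xs, c, List.drop_eq_getD_cons s hj, wordTarget_cons]
  have htake : ∀ j < N, W.take (j + 1) = W.take j ++ [c j] := fun j hj =>
    List.take_add_one_eq_append_getD s hj
  have hm_eq : ∀ j, (C.posRootsIn {s, t} (xs j)).ncard = m := fun j =>
    hm ▸ ncard_posRootsIn_wordTarget hC x fun d hd => hW d (List.mem_of_mem_drop hd)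
  have hup : ∀ j < N, up j → n (j + 1) = n j + 1 := fun j hj h => by
    have := ncard_inversions_concat_of_nonneg hC (hc j hj) (xs (j + 1)) (W.take j)
      (by rwa [← hxs j hj])
    simp only [n, f]
    rwa [htake j hj, hxs j hj]
  have hdown : ∀ j < N, ¬ up j → n (j + 1) + 1 = n j := fun j hj h => by
    have := ncard_inversions_concat_of_not_nonneg hC (hc j hj) (xs (j + 1)) (W.take j)
      (by rwa [← hxs j hj])
    simp only [n, f]
    rwa [htake j hj, hxs j hj]
  have hne : ∀ j, j + 1 < N → c j ≠ c (j + 1) := fun j hj =>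
    hchain.getD_ne_getD_add_one s hj
  have hturn_up : ∀ j, j + 1 < N → ¬ up j → up (j + 1) → n (j + 1) = 0 := by
    intro j hj h₁ h₂
    simp only [n, up, f] at h₁ h₂ ⊢
    rw [hxs j (by omega)] at h₁
    rw [htake j (by omega)] at h₂ ⊢
    rw [inversions_concat_eq_empty_of_turn hC hst (hne j hj) (hc j (by omega)) (hc (j + 1) hj)
      _ _ h₁ h₂, Set.ncard_empty]
  have hturn_down : ∀ j, j + 1 < N → up j → ¬ up (j + 1) → n (j + 1) = m := by
    intro j hj h₁ h₂
    simp only [n, up, f] at h₁ h₂ ⊢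
    rw [hxs j (by omega)] at h₁
    rw [htake j (by omega)] at h₂ ⊢
    rw [inversions_concat_eq_posRootsIn_of_turn hC hst (hne j hj) (hc j (by omega))
      (hc (j + 1) hj) _ _ h₁ h₂, hm_eq]
  have hle : ∀ j ≤ N, n j ≤ m := fun j _ =>
    hm_eq j ▸ Set.ncard_le_ncard (fun _ h => h.1) (posRootsIn_finite hC _ _)
  have hn₀ : n 0 = 0 := by simp [n, f, wordMap, inversions_id]
  have hnN : n N = 0 := by
    simp only [n, f, xs, hN, List.drop_length, List.take_length]
    change (C.inversions _ x (C.wordMap x W)).ncard = 0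
    rw [hid, inversions_id, Set.ncard_empty]
  have hm₀ : 0 < m := hm ▸ (Set.ncard_pos (posRootsIn_finite hC _ x)).2
    ⟨_, single_mem_posRootsIn (c := s) (by simp) x⟩
  obtain ⟨h2m, hn2m⟩ := two_mul_le_of_sawtooth hm₀ hn₀ hle hup hdown hturn_up hturn_down
    (List.length_pos_iff.2 hW₀) hnN
  exact ⟨h2m, (Set.ncard_eq_zero (inversions_finite hC _ _ _)).1 hn2m⟩

lemma wordTarget_eq_of_isChain_of_wordMap_eq_id (hC : C.IsFRS) (hst : s ≠ t) {x : A}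
    {W : List I} (hW : ∀ c ∈ W, c ∈ ({s, t} : Set I)) (hchain : W.IsChain (· ≠ ·))
    (hid : C.wordMap x W = id) : C.wordTarget x W = x := by
  classical
  induction hN : W.length using Nat.strong_induction_on generalizing W with
  | _ N ih =>
  rcases eq_or_ne W [] with rfl | hW₀
  · rfl
  obtain ⟨h2m, h₀⟩ := inversions_take_eq_empty_of_isChain hC hst x hW hchain hW₀ hid rfl
  set m := (C.posRootsIn {s, t} x).ncard
  set y := C.wordTarget x (W.drop (2 * m))
  have hB : ∀ c ∈ W.take (2 * m), c ∈ ({s, t} : Set I) := fun c hc =>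
    hW c (List.mem_of_mem_take hc)
  have hBid : C.wordMap y (W.take (2 * m)) = id :=
    wordMap_eq_id_of_inversions_eq_empty hC hst y hB h₀
  have hBtgt : C.wordTarget y (W.take (2 * m)) = y := by
    refine wordTarget_eq_of_isChain_of_length_eq hC hst y hB (hchain.take _) ?_
    rw [List.length_take,
      ncard_posRootsIn_wordTarget hC x fun d hd => hW d (List.mem_of_mem_drop hd)]
    omega
  have hsplit := List.take_append_drop (2 * m) W
  have hdrop : C.wordMap x (W.drop (2 * m)) = id := by
    have h := congrArg (C.wordMap x) hsplit
    rwa [C.wordMap_append, hBid, Function.id_comp, hid] at h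
  have hm₀ : 0 < m := (Set.ncard_pos (posRootsIn_finite hC _ x)).2
    ⟨_, single_mem_posRootsIn (c := s) (by simp) x⟩
  have hy : y = x := ih _ (by simp; omega) (fun d hd => hW d (List.mem_of_mem_drop hd))
    (hchain.drop _) hdrop rfl
  rw [← hsplit, C.wordTarget_append, hBtgt, hy]

lemma wordTarget_eq_of_wordMap_eq_id (hC : C.IsFRS) (hst : s ≠ t) {x : A} {q : List I}
    (hq : ∀ c ∈ q, c ∈ ({s, t} : Set I)) (hid : C.wordMap x q = id) :
    C.wordTarget x q = x := by
  induction hN : q.length using Nat.strong_induction_on generalizing q with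
  | _ N ih =>
  rcases q.exists_eq_append_cons_cons_or_isChain_ne with ⟨q₁, q₂, c, rfl⟩ | hchain
  · obtain ⟨htgt, hmap⟩ :=
      wordMor_eq_wordMor_iff.1 (wordMor_append_cons_cons (C := C) x q₁ q₂ c)
    rw [htgt]
    refine ih _ (by simp at hN ⊢; omega) (fun d hd => hq d ?_) (hmap ▸ hid) rfl
    simp only [List.mem_append, List.mem_cons] at hd ⊢
    tauto
  · exact wordTarget_eq_of_isChain_of_wordMap_eq_id hC hst hq hchain hid

lemma exists_wordMor_eq_length_eq_ncard_inversions (hC : C.IsFRS) (hst : s ≠ t) (a : A)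
    {l : List I} (hl : ∀ c ∈ l, c ∈ ({s, t} : Set I)) :
    ∃ q, (∀ c ∈ q, c ∈ ({s, t} : Set I)) ∧ C.wordMor a q = C.wordMor a l ∧
      q.length = (C.inversions {s, t} a (C.wordMap a l)).ncard := by
  induction hn : (C.inversions {s, t} a (C.wordMap a l)).ncard generalizing a l with
  | zero =>
    have hid := wordMap_eq_id_of_inversions_eq_empty hC hst a hl
      ((Set.ncard_eq_zero (inversions_finite hC _ _ _)).1 hn)
    exact ⟨[], by simp, wordMor_eq_wordMor_iff.2
      ⟨(wordTarget_eq_of_wordMap_eq_id hC hst hl hid).symm, hid.symm⟩, rfl⟩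
  | succ n ih =>
    obtain ⟨j, hj, hneg⟩ :
        ∃ j ∈ ({s, t} : Set I), ¬ 0 ≤ C.wordMap a l (Pi.single j 1) := by
      by_contra! h
      rw [inversions_eq_empty_of_nonneg hst a l (h s (by simp)) (h t (by simp)),
        Set.ncard_empty] at hn
      exact n.succ_ne_zero hn.symm
    have hcount := ncard_inversions_concat_of_not_nonneg hC hj (C.ρ j a) l (by rwa [C.ρ_invol])
    rw [C.ρ_invol, hn] at hcount
    obtain ⟨q, hq, hqeq, hqlen⟩ := ih (C.ρ j a) (l := l ++ [j])
      (fun c hc => (List.mem_append.1 hc).elim (hl c) fun h => List.mem_singleton.1 h ▸ hj)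
      (by omega)
    refine ⟨q ++ [j], fun c hc => (List.mem_append.1 hc).elim (hq c)
      fun h => List.mem_singleton.1 h ▸ hj, ?_, by simp [hqlen]⟩
    rw [wordMor_concat_congr j hqeq, List.append_assoc, List.singleton_append,
      wordMor_append_cons_cons, List.append_nil]

lemma exists_wordMor_eq_length_lt (hC : C.IsFRS) (hst : s ≠ t) (a : A) {p : List I}
    (hp : ∀ c ∈ p, c ∈ ({s, t} : Set I))
    (hneg : ¬ 0 ≤ C.wordMap (C.ρ s a) p (Pi.single s 1)) :
    ∃ q, (∀ c ∈ q, c ∈ ({s, t} : Set I)) ∧ C.wordMor a q = C.wordMor a (p ++ [s]) ∧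
      q.length < p.length := by
  obtain ⟨q, hq, hqeq, hqlen⟩ := exists_wordMor_eq_length_eq_ncard_inversions hC hst a
    (l := p ++ [s]) fun c hc => (List.mem_append.1 hc).elim (hp c) fun h => by simp_all
  have hcount := ncard_inversions_concat_of_not_nonneg hC (J := {s, t}) (by simp) a p hneg
  obtain ⟨k, hk⟩ := exists_ncard_inversions_add_two_mul hC (C.ρ s a) hp
  exact ⟨q, hq, hqeq, by omega⟩

end RankTwo

section Reduced

/-- Strip `σ_s` and `σ_t` off the right of `u` for as long as this shortens `u`. -/
lemma exists_factors_len_lt_compSigma (hC : C.IsFRS) (s t : I) {w u : Mor C} {p : List I}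
    (hp : ∀ c ∈ p, c ∈ ({s, t} : Set I)) (hwu : Factors w u p)
    (hlen : len w = len u + p.length) :
    ∃ u' p', (∀ c ∈ p', c ∈ ({s, t} : Set I)) ∧ Factors w u' p' ∧
      len w = len u' + p'.length ∧ p.length ≤ p'.length ∧
      len u' < len (u'.compSigma s) ∧ len u' < len (u'.compSigma t) := by
  induction hk : len u using Nat.strong_induction_on generalizing u p with
  | _ k ih =>
  by_cases h : ∃ c ∈ ({s, t} : Set I), len (u.compSigma c) ≤ len u
  · obtain ⟨c, hc, hle⟩ := h
    have hlt : len (u.compSigma c) + 1 = len u :=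
      (len_compSigma_eq hC u c).resolve_left (by omega)
    obtain ⟨u', p', hp', hfac, hlen', hpp, hs, ht⟩ := ih _ (by omega) (p := c :: p)
      (fun d hd => (List.mem_cons.1 hd).elim (· ▸ hc) (hp d)) (hwu.compSigma_left c)
      (by simp only [List.length_cons]; omega) rfl
    exact ⟨u', p', hp', hfac, hlen', by simp only [List.length_cons] at hpp; omega, hs, ht⟩
  · simp only [not_exists, not_and, not_le] at h
    exact ⟨u, p, hp, hwu, hlen, le_rfl, h s (by simp), h t (by simp)⟩

/-- Write `w = u' p'` with `p'` a word in `σ_s, σ_t` and `u'` without descents at `s, t`; then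
`u'(α_s), u'(α_t) > 0` by induction, and `p'(α_s) > 0` by the rank-two case. -/
theorem nonneg_toFun_single_of_len_lt (hC : C.IsFRS) (w : Mor C) (s : I)
    (h : len w < len (w.compSigma s)) : 0 ≤ w.toFun (Pi.single s 1) := by
  induction hk : len w using Nat.strong_induction_on generalizing w s with
  | _ k ih =>
  rcases eq_or_ne (len w) 0 with h₀ | h₀
  · obtain ⟨l, hl, hlen⟩ := exists_realizes_length_eq_len w
    rw [h₀, List.length_eq_zero_iff] at hlen
    subst hlen
    rw [← hl.2]
    exact single_nonneg s
  obtain ⟨u, t, rfl, hlen⟩ := exists_eq_compSigma_of_len_ne_zero h₀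
  have hst : s ≠ t := by
    rintro rfl
    rw [Mor.compSigma_compSigma] at h
    omega
  obtain ⟨u', p, hp, hfac, hlen', hpp, hs, ht⟩ := exists_factors_len_lt_compSigma hC s t
    (p := [t]) (by simp) (factors_compSigma u t) (by simpa using hlen)
  have hu' : len u' < k := by simp only [List.length_singleton] at hpp; omega
  have hp₀ : 0 ≤ C.wordMap (u.compSigma t).src p (Pi.single s 1) := by
    by_contra hneg
    obtain ⟨q, -, hqeq, hqlen⟩ := exists_wordMor_eq_length_lt hC hst
      (C.ρ s (u.compSigma t).src) hp (by rwa [C.ρ_invol])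
    have := ((hfac.compSigma_right s).of_wordMor_eq hqeq).len_le
    omega
  rw [hfac.2.2, Function.comp_apply]
  exact u'.nonneg_toFun_of_support_subset_pair hst
    (support_wordMap_subset _ hp (Pi.support_single_subset.trans (by simp))) hp₀
    (ih _ hu' u' s hs rfl) (ih _ hu' u' t ht rfl)

lemma exists_mem_inversions_apply_ne_zero (hC : C.IsFRS) {a : A} {l : List I}
    (hl : len (C.wordMor a l) = l.length) {i : I} (hi : i ∈ l) :
    ∃ β ∈ C.inversions Set.univ a (C.wordMap a l), β i ≠ 0 := by
  induction l using List.reverseRecOn generalizing a with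
  | nil => simp at hi
  | append_singleton l c ih =>
    have hlen : len (C.wordMor (C.ρ c a) l) = l.length ∧
        len (C.wordMor (C.ρ c a) l) < len ((C.wordMor (C.ρ c a) l).compSigma c) := by
      have h₁ := len_le_length (realizes_wordMor (C := C) (C.ρ c a) l)
      have h₂ := len_compSigma_le (C.wordMor (C.ρ c a) l) c
      rw [← wordMor_concat, hl, List.length_append, List.length_singleton] at h₂ ⊢
      omega
    have hpos : 0 ≤ C.wordMap (C.ρ c a) l (Pi.single c 1) :=
      nonneg_toFun_single_of_len_lt hC _ c hlen.2
    by_cases hic : i = c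
    · subst hic
      exact ⟨_, (single_mem_inversions_concat_iff hC (Set.mem_univ i) a l).2 hpos, by simp⟩
    obtain ⟨β, hβ, hβi⟩ := ih hlen.1 (by simpa [hic] using hi)
    have hβc : β ≠ Pi.single c 1 := fun h => hβi (by simp [h, hic])
    have hmem := (inversions_concat_diff hC (Set.mem_univ c) a l).symm.subset
      ⟨β, ⟨hβ, hβc⟩, rfl⟩
    exact ⟨_, hmem.1, by rwa [sigma_apply_of_ne _ hic]⟩

lemma IsReduced.mem_of_realizes (hC : C.IsFRS) {w : Mor C} {l l' : List I}
    (hl : IsReduced w l) (hl' : Realizes w l') {i : I} (hi : i ∈ l) : i ∈ l' := by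
  obtain ⟨β, ⟨⟨hβ, -⟩, hwβ⟩, hβi⟩ :=
    exists_mem_inversions_apply_ne_zero hC (hl.1.wordMor_eq ▸ hl.2).symm hi
  by_contra hi'
  rw [hl.1.2, ← hl'.2] at hwβ
  have := hC.nonpos_of_not_nonneg (wordMap_mem_roots l' hβ.1) hwβ i
  rw [wordMap_apply_of_notMem _ hi'] at this
  exact hβi (le_antisymm this (hβ.2 i))

end Reduced

end CartanScheme

variable {I A : Type} [Fintype I] [DecidableEq I] [Fintype A] [Nonempty A] [DecidableEq A]

open CartanScheme

/-- If `w = σ_{i_1}⋯σ_{i_k}` is a reduced decomposition and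
`w = σ_{j_1}⋯σ_{j_l}` any other decomposition, then `{i_1,…,i_k} ⊆ {j_1,…,j_l}` as sets.
In particular any two reduced decompositions of `w` use the same set of letters. -/
theorem reduced_word_letters_subset (C : CartanScheme I A) (hC : C.IsFRS)
    (w : Mor C) (l l' : List I) (hl : IsReduced w l) (hl' : Realizes w l') :
    (∀ i ∈ l, i ∈ l') ∧ (IsReduced w l' → l.toFinset = l'.toFinset) :=
  ⟨fun _ => hl.mem_of_realizes hC hl', fun hl'red => Finset.ext fun i => by
    simpa only [List.mem_toFinset] using
      ⟨hl.mem_of_realizes hC hl' (i := i), hl'red.mem_of_realizes hC hl.1 (i := i)⟩⟩
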